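/- Let (Σ, T, μ) be a shift system with α-mixing coefficients α(·), n an integer, and A ∈ ℱ_0^{n-1}. Write H(k) = μ(τ_A > k). Then for every integer s > 2n with μ(τ_A ≤ s − 2n) > 0 and every positive integer q, |H(qs) − H(s − 2n)^q| ≤ (μ(τ_A ≤ 2n) + α(n)) / μ(τ_A ≤ s − 2n). -/

import Mathlib

open MeasureTheory Filter Set
open scoped ENNReal Topology

noncomputable section

/-- First hitting time (at time ≥ 1) of the set `A` under `T`, valued in `ℕ∞`. -/
def hitTime {X : Type*} (T : X → X) (A : Set X) (x : X) : ℕ∞ :=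
  ⨅ k ∈ {k : ℕ | 1 ≤ k ∧ T^[k] x ∈ A}, (k : ℕ∞)

/-- The shift map on one-sided sequences. -/
def shift (𝒜 : Type*) : (ℕ → 𝒜) → (ℕ → 𝒜) := fun x n => x (n + 1)

/-- The σ-algebra `ℱ_m^n` generated by the coordinates `m, …, n`. -/
def coordSigma (𝒜 : Type*) [m𝒜 : MeasurableSpace 𝒜] (m n : ℕ) :
    MeasurableSpace (ℕ → 𝒜) :=
  ⨆ i ∈ Set.Icc m n, m𝒜.comap (fun x => x i)

/-- The α-mixing coefficient `α(g)`. -/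
def alphaMix {𝒜 : Type*} [MeasurableSpace 𝒜] (μ : Measure (ℕ → 𝒜)) (g : ℕ) : ℝ :=
  ⨆ m : ℕ, ⨆ n : ℕ,
    ⨆ A : {A : Set (ℕ → 𝒜) // MeasurableSet[coordSigma 𝒜 0 n] A},
      ⨆ B : {B : Set (ℕ → 𝒜) // MeasurableSet[coordSigma 𝒜 (n + g) (m + g)] B},
        |(μ ((A : Set (ℕ → 𝒜)) ∩ B)).toReal - (μ A).toReal * (μ B).toReal|


/-! Write `E(a, b)` for the event that the orbit avoids `A` at times `a, …, b`, so that
`H(k) = μ E(1, k)`. Cutting `E(1, t + s)` at a gap of length `2n` after time `t` costs at most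
`μ(τ_A ≤ 2n)` by invariance. Since `A` depends on `n` coordinates, the remaining past `E(1, t)` and
future `E(t + 2n + 1, t + s)` depend on coordinate blocks `n` apart, so their correlation is at most
`α(n)`, and the future has probability `H(s - 2n)`. Thus `H(t + s)` is within
`ε = μ(τ_A ≤ 2n) + α(n)` of `H(t) H(s - 2n)`, and iterating along `t = ks` keeps `H(ks)` within
`ε / (1 - H(s - 2n))` of `H(s - 2n)^k`. -/

section NoEntry

variable {X : Type*} (T : X → X) (A : Set X)

def noEntry (a b : ℕ) : Set X :=
  ⋂ j ∈ Icc a b, T^[j] ⁻¹' Aᶜ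

variable {T A}

lemma mem_noEntry {a b : ℕ} {x : X} :
    x ∈ noEntry T A a b ↔ ∀ j, a ≤ j → j ≤ b → T^[j] x ∉ A := by
  simp [noEntry]

lemma noEntry_eq_univ_of_lt {a b : ℕ} (hba : b < a) : noEntry T A a b = univ :=
  eq_univ_of_forall fun _ => mem_noEntry.2 fun _ _ _ => by omega

lemma preimage_iterate_noEntry (a b t : ℕ) :
    T^[t] ⁻¹' noEntry T A a b = noEntry T A (a + t) (b + t) := by
  ext x
  simp only [mem_preimage, mem_noEntry, ← Function.iterate_add_apply]
  refine ⟨fun h j hj₁ hj₂ => ?_, fun h j hj₁ hj₂ => h (j + t) (by omega) (by omega)⟩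
  simpa [Nat.sub_add_cancel (by omega : t ≤ j)] using h (j - t) (by omega) (by omega)

lemma noEntry_eq_inter {a b c : ℕ} (hac : a ≤ c + 1) (hcb : c ≤ b) :
    noEntry T A a b = noEntry T A a c ∩ noEntry T A (c + 1) b := by
  ext x
  simp only [mem_inter_iff, mem_noEntry]
  refine ⟨fun h => ⟨fun j hj₁ hj₂ => h j hj₁ (by omega), fun j hj₁ hj₂ => h j (by omega) hj₂⟩,
    fun ⟨h₁, h₂⟩ j hj₁ hj₂ => ?_⟩
  rcases le_or_gt j c with hjc | hjc
  · exact h₁ j hj₁ hjc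
  · exact h₂ j hjc hj₂

lemma lt_hitTime_iff_mem_noEntry {m : ℕ} {x : X} :
    (m : ℕ∞) < hitTime T A x ↔ x ∈ noEntry T A 1 m := by
  rw [← ENat.add_one_le_iff (ENat.natCast_ne_top m), hitTime, le_iInf₂_iff, mem_noEntry]
  refine forall_congr' fun k => ?_
  simp only [mem_ofPred_eq, and_imp]
  norm_cast
  constructor
  · intro h hk₁ hkm hk
    have := h hk₁ hk
    omega
  · intro h hk₁ hk
    by_contra hkm
    exact h hk₁ (by omega) hk

lemma setOf_lt_hitTime (m : ℕ) : {x | (m : ℕ∞) < hitTime T A x} = noEntry T A 1 m :=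
  ext fun _ => lt_hitTime_iff_mem_noEntry

lemma setOf_hitTime_le (m : ℕ) : {x | hitTime T A x ≤ (m : ℕ∞)} = (noEntry T A 1 m)ᶜ :=
  ext fun _ => not_lt.symm.trans (not_congr lt_hitTime_iff_mem_noEntry)

lemma measureReal_noEntry_add [MeasurableSpace X] {μ : Measure X}
    (hT : MeasurePreserving T μ μ) {a b : ℕ} (hmeas : MeasurableSet (noEntry T A a b)) (t : ℕ) :
    μ.real (noEntry T A (a + t) (b + t)) = μ.real (noEntry T A a b) := by
  rw [← preimage_iterate_noEntry]
  exact (hT.iterate t).measureReal_preimage hmeas.nullMeasurableSet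

end NoEntry

lemma abs_measureReal_inter_sub_le {α : Type*} [MeasurableSpace α] {μ : Measure α}
    [IsFiniteMeasure μ] (Y W : Set α) : |μ.real (Y ∩ W) - μ.real Y| ≤ μ.real Wᶜ := by
  have hcover : Y ⊆ (Y ∩ W) ∪ Wᶜ := fun x hx => (em (x ∈ W)).imp (⟨hx, ·⟩) id
  have hle : μ.real Y ≤ μ.real (Y ∩ W) + μ.real Wᶜ :=
    (measureReal_mono hcover).trans (measureReal_union_le _ _)
  rw [abs_sub_comm, abs_of_nonneg (sub_nonneg.2 (measureReal_mono inter_subset_left))]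
  linarith

lemma abs_measureReal_inter_sub_mul_le_one {α : Type*} [MeasurableSpace α] {μ : Measure α}
    [IsProbabilityMeasure μ] (Y Z : Set α) : |μ.real (Y ∩ Z) - μ.real Y * μ.real Z| ≤ 1 :=
  abs_sub_le_of_nonneg_of_le measureReal_nonneg measureReal_le_one
    (mul_nonneg measureReal_nonneg measureReal_nonneg)
    (mul_le_one₀ measureReal_le_one measureReal_nonneg measureReal_le_one)

lemma shift_iterate_apply {𝒜 : Type*} (j : ℕ) (x : ℕ → 𝒜) (i : ℕ) :
    (shift 𝒜)^[j] x i = x (i + j) := by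
  induction j generalizing x with
  | zero => rfl
  | succ j ih => exact ih (shift 𝒜 x)

section Shift

variable {𝒜 : Type*} [MeasurableSpace 𝒜]

lemma coordSigma_mono {a b a' b' : ℕ} (ha : a' ≤ a) (hb : b ≤ b') :
    coordSigma 𝒜 a b ≤ coordSigma 𝒜 a' b' :=
  iSup₂_le fun i hi => le_iSup₂ (f := fun i (_ : i ∈ Icc a' b') =>
    MeasurableSpace.comap (fun x : ℕ → 𝒜 => x i) ‹_›) i ⟨ha.trans hi.1, hi.2.trans hb⟩

lemma coordSigma_le_pi (a b : ℕ) : coordSigma 𝒜 a b ≤ MeasurableSpace.pi :=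
  iSup₂_le fun i _ => (measurable_pi_apply i).comap_le

lemma measurable_shift_iterate_coordSigma (j c : ℕ) :
    @Measurable _ _ (coordSigma 𝒜 j (j + c)) (coordSigma 𝒜 0 c) (shift 𝒜)^[j] := by
  rw [measurable_iff_comap_le, coordSigma, MeasurableSpace.comap_iSup]
  refine iSup_le fun i => ?_
  rw [MeasurableSpace.comap_iSup]
  refine iSup_le fun ⟨_, hic⟩ => ?_
  rw [MeasurableSpace.comap_comp]
  have hcoord : (fun x : ℕ → 𝒜 => x i) ∘ (shift 𝒜)^[j] = fun x => x (i + j) :=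
    funext fun x => shift_iterate_apply j x i
  rw [hcoord]
  exact le_iSup₂ (f := fun i (_ : i ∈ Icc j (j + c)) =>
    MeasurableSpace.comap (fun x : ℕ → 𝒜 => x i) ‹_›) (i + j) ⟨by omega, by omega⟩

lemma measurableSet_noEntry_coordSigma {A : Set (ℕ → 𝒜)} {c : ℕ}
    (hA : MeasurableSet[coordSigma 𝒜 0 c] A) (a b : ℕ) :
    MeasurableSet[coordSigma 𝒜 a (b + c)] (noEntry (shift 𝒜) A a b) :=
  MeasurableSet.biInter (to_countable _) fun j ⟨haj, hjb⟩ =>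
    coordSigma_mono haj (by omega) _ (measurable_shift_iterate_coordSigma j c hA.compl)

lemma measurableSet_noEntry_shift {A : Set (ℕ → 𝒜)} {c : ℕ}
    (hA : MeasurableSet[coordSigma 𝒜 0 c] A) (a b : ℕ) :
    MeasurableSet (noEntry (shift 𝒜) A a b) :=
  coordSigma_le_pi _ _ _ (measurableSet_noEntry_coordSigma hA a b)

variable {μ : Measure (ℕ → 𝒜)} [IsProbabilityMeasure μ]

lemma abs_measureReal_inter_sub_mul_le_alphaMix {g N M : ℕ} {Y Z : Set (ℕ → 𝒜)}
    (hY : MeasurableSet[coordSigma 𝒜 0 N] Y)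
    (hZ : MeasurableSet[coordSigma 𝒜 (N + g) (M + g)] Z) :
    |μ.real (Y ∩ Z) - μ.real Y * μ.real Z| ≤ alphaMix μ g := by
  unfold alphaMix
  simp only [← measureReal_def]
  refine le_ciSup_of_le ?_ M <| le_ciSup_of_le ?_ N <| le_ciSup_of_le ?_ ⟨Y, hY⟩ <|
    le_ciSup_of_le ?_ ⟨Z, hZ⟩ le_rfl
  all_goals
    refine ⟨1, forall_mem_range.2 fun _ => ?_⟩
    repeat refine Real.iSup_le (fun _ => ?_) zero_le_one
    exact abs_measureReal_inter_sub_mul_le_one _ _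

lemma abs_measureReal_noEntry_add_sub_mul_le (hT : MeasurePreserving (shift 𝒜) μ μ)
    {A : Set (ℕ → 𝒜)} {n : ℕ} (hA : MeasurableSet[coordSigma 𝒜 0 (n - 1)] A)
    {s : ℕ} (hs : 2 * n < s) (t : ℕ) :
    |μ.real (noEntry (shift 𝒜) A 1 (t + s)) -
        μ.real (noEntry (shift 𝒜) A 1 t) * μ.real (noEntry (shift 𝒜) A 1 (s - 2 * n))| ≤
      μ.real (noEntry (shift 𝒜) A 1 (2 * n))ᶜ + alphaMix μ n := by
  set past := noEntry (shift 𝒜) A 1 t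
  set gap := noEntry (shift 𝒜) A (t + 1) (t + 2 * n)
  set future := noEntry (shift 𝒜) A (t + 2 * n + 1) (t + s)
  have hsplit : noEntry (shift 𝒜) A 1 (t + s) = past ∩ future ∩ gap := by
    rw [noEntry_eq_inter (c := t) (by omega) (by omega),
      noEntry_eq_inter (a := t + 1) (c := t + 2 * n) (by omega) (by omega)]
    ext x
    simp only [mem_inter_iff]
    tauto
  have hgap : μ.real gapᶜ = μ.real (noEntry (shift 𝒜) A 1 (2 * n))ᶜ := by
    rw [probReal_compl_eq_one_sub (measurableSet_noEntry_shift hA _ _),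
      probReal_compl_eq_one_sub (measurableSet_noEntry_shift hA _ _), add_comm t,
      add_comm t, measureReal_noEntry_add hT (measurableSet_noEntry_shift hA _ _)]
  have hfuture : μ.real future = μ.real (noEntry (shift 𝒜) A 1 (s - 2 * n)) := by
    show μ.real (noEntry (shift 𝒜) A (t + 2 * n + 1) (t + s)) = _
    rw [show t + 2 * n + 1 = 1 + (t + 2 * n) by omega,
      show t + s = s - 2 * n + (t + 2 * n) by omega,
      measureReal_noEntry_add hT (measurableSet_noEntry_shift hA _ _)]
  have hpast_meas : MeasurableSet[coordSigma 𝒜 0 (t + n)] past :=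
    coordSigma_mono (Nat.zero_le 1) (by omega) _ (measurableSet_noEntry_coordSigma hA 1 t)
  have hfuture_meas : MeasurableSet[coordSigma 𝒜 (t + n + n) (t + s + n)] future :=
    coordSigma_mono (by omega) (by omega) _ (measurableSet_noEntry_coordSigma hA _ _)
  have hmix : |μ.real (past ∩ future) - μ.real past * μ.real future| ≤ alphaMix μ n :=
    abs_measureReal_inter_sub_mul_le_alphaMix hpast_meas hfuture_meas
  rw [hsplit, ← hfuture, ← hgap]
  calc |μ.real (past ∩ future ∩ gap) - μ.real past * μ.real future|
      ≤ |μ.real (past ∩ future ∩ gap) - μ.real (past ∩ future)| +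
          |μ.real (past ∩ future) - μ.real past * μ.real future| := abs_sub_le _ _ _
    _ ≤ μ.real gapᶜ + alphaMix μ n := add_le_add (abs_measureReal_inter_sub_le _ _) hmix

end Shift

lemma abs_sub_pow_le_of_abs_succ_sub_mul_le {u : ℕ → ℝ} {h ε : ℝ} (h₀ : 0 ≤ h) (h₁ : h < 1)
    (hu₀ : u 0 = 1) (hu : ∀ k, |u (k + 1) - u k * h| ≤ ε) (k : ℕ) :
    |u k - h ^ k| ≤ ε / (1 - h) := by
  have hpos : 0 < 1 - h := sub_pos.2 h₁
  induction k with
  | zero => simpa [hu₀] using div_nonneg ((abs_nonneg _).trans (hu 0)) hpos.le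
  | succ k ih =>
    calc |u (k + 1) - h ^ (k + 1)|
        ≤ |u (k + 1) - u k * h| + |u k - h ^ k| * h := by
          rw [← abs_of_nonneg h₀, ← abs_mul, abs_of_nonneg h₀, sub_mul, ← pow_succ]
          exact abs_sub_le _ _ _
      _ ≤ ε + ε / (1 - h) * h := add_le_add (hu k) (mul_le_mul_of_nonneg_right ih h₀)
      _ = ε / (1 - h) := by field_simp; ring

theorem tail_power_estimate_general
    {𝒜 : Type*} [MeasurableSpace 𝒜]
    (μ : Measure (ℕ → 𝒜)) [IsProbabilityMeasure μ]
    (hT : MeasurePreserving (shift 𝒜) μ μ)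
    (n : ℕ) (A : Set (ℕ → 𝒜))
    (hAmeas : MeasurableSet[coordSigma 𝒜 0 (n - 1)] A)
    (s : ℕ) (hs : 2 * n < s)
    (hpos : 0 < (μ {x | hitTime (shift 𝒜) A x ≤ ((s - 2 * n : ℕ) : ℕ∞)}).toReal)
    (q : ℕ) :
    |(μ {x | ((q * s : ℕ) : ℕ∞) < hitTime (shift 𝒜) A x}).toReal -
        (μ {x | ((s - 2 * n : ℕ) : ℕ∞) < hitTime (shift 𝒜) A x}).toReal ^ q| ≤
      ((μ {x | hitTime (shift 𝒜) A x ≤ ((2 * n : ℕ) : ℕ∞)}).toReal + alphaMix μ n) /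
        (μ {x | hitTime (shift 𝒜) A x ≤ ((s - 2 * n : ℕ) : ℕ∞)}).toReal := by
  simp only [setOf_lt_hitTime, setOf_hitTime_le] at hpos ⊢
  change 0 < μ.real _ at hpos
  change |μ.real _ - μ.real _ ^ q| ≤ (μ.real _ + _) / μ.real _
  rw [probReal_compl_eq_one_sub (measurableSet_noEntry_shift hAmeas 1 (s - 2 * n))] at hpos ⊢
  refine abs_sub_pow_le_of_abs_succ_sub_mul_le
    (u := fun k => μ.real (noEntry (shift 𝒜) A 1 (k * s))) measureReal_nonneg (by linarith)
    ?_ (fun k => ?_) q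
  · simp [noEntry_eq_univ_of_lt]
  · simpa only [add_mul, one_mul] using abs_measureReal_noEntry_add_sub_mul_le hT hAmeas hs (k * s)

/-- **Tail of the hitting time along multiples of `s` versus `q`-th powers.**
For a shift system with α-mixing coefficients `α(·)`, `A ∈ ℱ_0^{n-1}`, every integer
`s > 2n` with `μ(τ_A ≤ s−2n) > 0` and every `q ≥ 1`,
`|H(qs) − H(s−2n)^q| ≤ (μ(τ_A ≤ 2n) + α(n)) / μ(τ_A ≤ s−2n)`, where `H(k) = μ(τ_A > k)`. -/
theorem tail_power_estimate
    {𝒜 : Type*} [Countable 𝒜] [MeasurableSpace 𝒜] [DiscreteMeasurableSpace 𝒜]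
    (μ : Measure (ℕ → 𝒜)) [IsProbabilityMeasure μ]
    (hT : MeasurePreserving (shift 𝒜) μ μ)
    (n : ℕ) (A : Set (ℕ → 𝒜))
    (hAmeas : MeasurableSet[coordSigma 𝒜 0 (n - 1)] A)
    (s : ℕ) (hs : 2 * n < s)
    (hpos : 0 < (μ {x | hitTime (shift 𝒜) A x ≤ ((s - 2 * n : ℕ) : ℕ∞)}).toReal)
    (q : ℕ) (hq : 1 ≤ q) :
    |(μ {x | ((q * s : ℕ) : ℕ∞) < hitTime (shift 𝒜) A x}).toReal -
        (μ {x | ((s - 2 * n : ℕ) : ℕ∞) < hitTime (shift 𝒜) A x}).toReal ^ q| ≤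
      ((μ {x | hitTime (shift 𝒜) A x ≤ ((2 * n : ℕ) : ℕ∞)}).toReal + alphaMix μ n) /
        (μ {x | hitTime (shift 𝒜) A x ≤ ((s - 2 * n : ℕ) : ℕ∞)}).toReal :=
  tail_power_estimate_general μ hT n A hAmeas s hs hpos q
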